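/- Fix n ≥ 1, and let 𝓕ₙ be the class of graphs F having exactly n vertices of infinite degree, forming a set X, such that every edge of F has at least one endpoint in X. Then every F ∈ 𝓕ₙ satisfies F → (S_∞, nK₂), and every graph Γ with Γ → (S_∞, nK₂) contains a subgraph belonging to 𝓕ₙ. -/

import Mathlib

open SimpleGraph

/-- `G` embeds into `H`: an injective graph homomorphism (not necessarily induced). -/
def EmbedsIn {α β : Type*} (G : SimpleGraph α) (H : SimpleGraph β) : Prop :=
  ∃ f : G →g H, Function.Injective f

/-- `G` is self-embeddable: it admits an injective adjacency-preserving self-map whose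
image, as a subgraph, is a proper subgraph (strictly smaller edge set). -/
def SelfEmbeddable {α : Type*} (G : SimpleGraph α) : Prop :=
  ∃ f : G →g G, Function.Injective f ∧ Sym2.map f '' G.edgeSet ⊂ G.edgeSet

/-- `G` is strongly self-embeddable: `G` embeds into `G - v` for every vertex `v`. -/
def StronglySelfEmbeddable {α : Type*} (G : SimpleGraph α) : Prop :=
  ∀ v : α, EmbedsIn G (G.induce ({v}ᶜ : Set α))

/-- The subgraph of `F` consisting of the edges with color `b` under coloring `c`. -/
def colorSubgraph {α : Type*} (F : SimpleGraph α) (c : Sym2 α → Bool) (b : Bool) :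
    SimpleGraph α where
  Adj x y := F.Adj x y ∧ c s(x, y) = b
  symm := ⟨by
    intro x y h
    exact ⟨h.1.symm, by rw [Sym2.eq_swap]; exact h.2⟩⟩
  loopless := ⟨by intro x h; exact F.ne_of_adj h.1 rfl⟩

/-- `F → (G, H)` : every red-blue coloring of the edges of `F` yields a red copy of `G`
or a blue copy of `H` (here `true` = red, `false` = blue). -/
def Arrows {α β γ : Type*} (F : SimpleGraph α) (G : SimpleGraph β) (H : SimpleGraph γ) : Prop :=
  ∀ c : Sym2 α → Bool,
    EmbedsIn G (colorSubgraph F c true) ∨ EmbedsIn H (colorSubgraph F c false)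

/-- `F` is `(G,H)`-minimal: it arrows `(G,H)` but no proper subgraph of it does. -/
def RamseyMinimal {α β γ : Type*} (F : SimpleGraph α) (G : SimpleGraph β)
    (H : SimpleGraph γ) : Prop :=
  Arrows F G H ∧ ∀ F' : SimpleGraph α, F' < F → ¬ Arrows F' G H

/-- `G` has no isolated vertices. -/
def NoIsolated {α : Type*} (G : SimpleGraph α) : Prop := ∀ v, ∃ w, G.Adj v w

/-- The single-edge graph `K₂`. -/
def K2 : SimpleGraph (Fin 2) := ⊤

/-- The matching `nK₂` with `n` pairwise disjoint edges. -/
def Matching (n : ℕ) : SimpleGraph (Fin n × Fin 2) where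
  Adj a b := a.1 = b.1 ∧ a.2 ≠ b.2
  symm := ⟨by intro a b h; exact ⟨h.1.symm, h.2.symm⟩⟩
  loopless := ⟨by intro a h; exact h.2 rfl⟩

/-- The disjoint union `nG` of `n` copies of `G`. -/
def nCopies {V : Type*} (n : ℕ) (G : SimpleGraph V) : SimpleGraph (Fin n × V) where
  Adj a b := a.1 = b.1 ∧ G.Adj a.2 b.2
  symm := ⟨by intro a b h; exact ⟨h.1.symm, h.2.symm⟩⟩
  loopless := ⟨by intro a h; exact G.ne_of_adj h.2 rfl⟩

/-- The infinite star `S_∞ = K_{1,∞}`, with center `none`. -/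
def InfStar : SimpleGraph (Option ℕ) := SimpleGraph.fromRel (fun a _ => a = none)

/-- The finite star `K_{1,n}`, with center `none`. -/
def StarN (n : ℕ) : SimpleGraph (Option (Fin n)) := SimpleGraph.fromRel (fun a _ => a = none)

/-- The ray `P_∞` (one-way infinite path) on `ℕ`. -/
def Ray : SimpleGraph ℕ := SimpleGraph.fromRel (fun a b => b = a + 1)

/-- The `k`-ray `P_{k∞}`: `k` rays glued at a common endpoint `none`. -/
def kRay (k : ℕ) : SimpleGraph (Option (Fin k × ℕ)) :=
  SimpleGraph.fromRel (fun a b =>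
    (a = none ∧ ∃ i, b = some (i, 0)) ∨ (∃ i n, a = some (i, n) ∧ b = some (i, n + 1)))
/-- Membership in the family `𝓕ₙ`: exactly `n` vertices of infinite degree, and every
edge is incident to one of them. -/
def InFamilyN {W : Type*} (n : ℕ) (F : SimpleGraph W) : Prop :=
  (∃ X : Finset W, (↑X : Set W) = {v | (F.neighborSet v).Infinite} ∧ X.card = n) ∧
  ∀ a b, F.Adj a b → (F.neighborSet a).Infinite ∨ (F.neighborSet b).Infinite

/-!
A graph arrows `(S_∞, nK₂)` exactly when it has at least `n` vertices of infinite degree.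
Given `n` such vertices and a coloring with no vertex of infinite red degree, each of them keeps
infinitely many blue neighbours, so a blue `nK₂` can be chosen greedily. Conversely, if the
infinite-degree vertices lie in a set `Y` with `|Y| < n`, color red exactly the edges missing `Y`:
the center of a red `S_∞` would be a vertex of infinite degree outside `Y`, and a blue `nK₂`
would need `n` distinct vertices of `Y`. Keeping only the edges at `n` vertices of infinite
degree of a graph that arrows `(S_∞, nK₂)` yields a member of `𝓕ₙ`.
-/

namespace SimpleGraph

variable {V : Type*}

def infiniteDegreeVerts (G : SimpleGraph V) : Set V := {v | (G.neighborSet v).Infinite}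

def incidentSubgraph (G : SimpleGraph V) (X : Set V) : SimpleGraph V where
  Adj a b := G.Adj a b ∧ (a ∈ X ∨ b ∈ X)
  symm := ⟨fun _ _ h => ⟨h.1.symm, h.2.symm⟩⟩
  loopless := ⟨fun _ h => G.ne_of_adj h.1 rfl⟩

variable {G : SimpleGraph V} {X : Set V} {a b v : V}

@[simp]
lemma incidentSubgraph_adj : (G.incidentSubgraph X).Adj a b ↔ G.Adj a b ∧ (a ∈ X ∨ b ∈ X) :=
  Iff.rfl

lemma incidentSubgraph_le : G.incidentSubgraph X ≤ G := fun _ _ h => (incidentSubgraph_adj.1 h).1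

lemma neighborSet_incidentSubgraph_of_mem (hv : v ∈ X) :
    (G.incidentSubgraph X).neighborSet v = G.neighborSet v :=
  Set.ext fun _ =>
    ⟨fun h => (incidentSubgraph_adj.1 h).1, fun h => incidentSubgraph_adj.2 ⟨h, .inl hv⟩⟩

lemma neighborSet_incidentSubgraph_subset_of_notMem (hv : v ∉ X) :
    (G.incidentSubgraph X).neighborSet v ⊆ X :=
  fun _ h => (incidentSubgraph_adj.1 h).2.resolve_left hv

lemma infiniteDegreeVerts_incidentSubgraph (hXfin : X.Finite) (hX : X ⊆ G.infiniteDegreeVerts) :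
    (G.incidentSubgraph X).infiniteDegreeVerts = X := by
  ext v
  by_cases hv : v ∈ X
  · simpa [hv, infiniteDegreeVerts, neighborSet_incidentSubgraph_of_mem hv] using hX hv
  · refine iff_of_false (fun h => h ?_) hv
    exact hXfin.subset (neighborSet_incidentSubgraph_subset_of_notMem hv)

end SimpleGraph

lemma inFamilyN_incidentSubgraph {V : Type*} {G : SimpleGraph V} {X : Finset V}
    (hX : ↑X ⊆ G.infiniteDegreeVerts) : InFamilyN X.card (G.incidentSubgraph X) := by
  have hdeg := infiniteDegreeVerts_incidentSubgraph X.finite_toSet hX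
  refine ⟨⟨X, hdeg.symm, rfl⟩, fun a b hab => ?_⟩
  rcases (incidentSubgraph_adj.1 hab).2 with h | h
  · exact .inl (hdeg.ge h)
  · exact .inr (hdeg.ge h)

lemma infStar_adj_none_some (k : ℕ) : InfStar.Adj none (some k) := by
  simp [InfStar]

lemma embedsIn_infStar_iff {V : Type*} {G : SimpleGraph V} :
    EmbedsIn InfStar G ↔ ∃ v, (G.neighborSet v).Infinite := by
  constructor
  · rintro ⟨f, hf⟩
    refine ⟨f none, (Set.infinite_range_of_injective (hf.comp (Option.some_injective ℕ))).mono ?_⟩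
    rintro _ ⟨k, rfl⟩
    exact f.map_adj (infStar_adj_none_some k)
  · rintro ⟨v, hv⟩
    let g := hv.natEmbedding
    have hg (k : ℕ) : G.Adj v (g k) := (g k).2
    refine ⟨⟨fun a => a.elim v (fun k => g k), ?_⟩, ?_⟩
    · simp only [InfStar, fromRel_adj]
      rintro (_ | a) (_ | b) ⟨hne, hab⟩ <;> simp_all [(hg _).symm]
    · have hne (k : ℕ) : v ≠ g k := G.ne_of_adj (hg k)
      rintro (_ | a) (_ | b) h
      · rfl
      · exact absurd h (hne b)
      · exact absurd h.symm (hne a)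
      · exact congrArg some (g.injective (Subtype.ext h))

lemma matching_adj_zero_one {n : ℕ} (i : Fin n) : (Matching n).Adj (i, 0) (i, 1) :=
  ⟨rfl, Fin.zero_ne_one⟩

lemma card_le_of_embedsIn_matching {V : Type*} {G : SimpleGraph V} {n : ℕ} (Y : Finset V)
    (hY : ∀ a b, G.Adj a b → a ∈ Y ∨ b ∈ Y) (h : EmbedsIn (Matching n) G) : n ≤ Y.card := by
  obtain ⟨f, hf⟩ := h
  have hcover (i : Fin n) : ∃ j, f (i, j) ∈ Y := by
    rcases hY _ _ (f.map_adj (matching_adj_zero_one i)) with h | h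
    exacts [⟨0, h⟩, ⟨1, h⟩]
  choose j hj using hcover
  simpa using Finset.card_le_card_of_injOn (s := Finset.univ) (fun i => f (i, j i))
    (fun i _ => hj i) (fun i _ i' _ h => congrArg Prod.fst (hf h))

lemma embedsIn_matching_of_adj {V : Type*} {G : SimpleGraph V} {n : ℕ} (x y : Fin n → V)
    (hx : Function.Injective x) (hy : Function.Injective y) (hxy : ∀ i j, x i ≠ y j)
    (hadj : ∀ i, G.Adj (x i) (y i)) : EmbedsIn (Matching n) G := by
  refine ⟨⟨fun p => if p.2 = 0 then x p.1 else y p.1, ?_⟩, ?_⟩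
  · rintro ⟨i, j⟩ ⟨i', j'⟩ ⟨rfl, hjj'⟩
    fin_cases j <;> fin_cases j' <;> simp_all [(hadj _).symm]
  · rintro ⟨i, j⟩ ⟨i', j'⟩ h
    fin_cases j <;> fin_cases j' <;> simp_all [hx.eq_iff, hy.eq_iff, (hxy _ _).symm]

lemma exists_injective_forall_mem_diff {α : Type*} :
    ∀ {n : ℕ} (B : Fin n → Set α), (∀ i, (B i).Infinite) → ∀ {X : Set α}, X.Finite →
      ∃ y : Fin n → α, Function.Injective y ∧ ∀ i, y i ∈ B i \ X
  | 0, _, _, _, _ => ⟨Fin.elim0, fun i => i.elim0, fun i => i.elim0⟩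
  | _ + 1, B, hB, X, hX => by
    obtain ⟨y, hy, hyB⟩ := exists_injective_forall_mem_diff (fun i => B i.succ) (fun _ => hB _) hX
    obtain ⟨y₀, hy₀B, hy₀⟩ := ((hB 0).sdiff (hX.union (Set.finite_range y))).nonempty
    refine ⟨Fin.cons y₀ y, Fin.cons_injective_iff.2 ⟨fun h => hy₀ (.inr h), hy⟩, ?_⟩
    exact Fin.cases ⟨hy₀B, fun h => hy₀ (.inl h)⟩ hyB

lemma embedsIn_matching_of_infinite_neighborSet {V : Type*} {G : SimpleGraph V} (X : Finset V)
    (hX : ∀ x ∈ X, (G.neighborSet x).Infinite) : EmbedsIn (Matching X.card) G := by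
  let x : Fin X.card → V := fun i => X.equivFin.symm i
  have hx : Function.Injective x := Subtype.val_injective.comp X.equivFin.symm.injective
  obtain ⟨y, hy, hyx⟩ := exists_injective_forall_mem_diff (fun i => G.neighborSet (x i))
    (fun i => hX _ (X.equivFin.symm i).2) X.finite_toSet
  exact embedsIn_matching_of_adj x y hx hy
    (fun i j h => (hyx j).2 (h ▸ (X.equivFin.symm i).2)) (fun i => (hyx i).1)

lemma neighborSet_subset_union_colorSubgraph {V : Type*} (G : SimpleGraph V) (c : Sym2 V → Bool)
    (v : V) : G.neighborSet v ⊆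
      (colorSubgraph G c true).neighborSet v ∪ (colorSubgraph G c false).neighborSet v := by
  intro w hw
  cases hc : c s(v, w)
  exacts [.inr ⟨hw, hc⟩, .inl ⟨hw, hc⟩]

section Arrows

variable {V : Type*} {G : SimpleGraph V} {n : ℕ}

lemma arrows_of_subset_infiniteDegreeVerts (X : Finset V) (hX : ↑X ⊆ G.infiniteDegreeVerts) :
    Arrows G InfStar (Matching X.card) := by
  intro c
  by_cases hred : ∃ v, ((colorSubgraph G c true).neighborSet v).Infinite
  · exact .inl (embedsIn_infStar_iff.2 hred)
  simp only [not_exists, Set.not_infinite] at hred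
  refine .inr (embedsIn_matching_of_infinite_neighborSet X fun x hx hblue => ?_)
  exact hX hx (((hred x).union hblue).subset (neighborSet_subset_union_colorSubgraph G c x))

lemma card_le_of_arrows {Y : Finset V} (hY : G.infiniteDegreeVerts ⊆ Y)
    (h : Arrows G InfStar (Matching n)) : n ≤ Y.card := by
  classical
  rcases h (fun e => decide (∀ v ∈ e, v ∉ Y)) with hstar | hmatch
  · obtain ⟨v, hv⟩ := embedsIn_infStar_iff.1 hstar
    obtain ⟨w, hvw⟩ := hv.nonempty
    have hred : decide (∀ u ∈ s(v, w), u ∉ Y) = true := hvw.2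
    have hvY : v ∈ Y := hY (hv.mono fun _ h => h.1)
    simp_all
  · refine card_le_of_embedsIn_matching Y (fun a b hab => ?_) hmatch
    have hblue : decide (∀ v ∈ s(a, b), v ∉ Y) = false := hab.2
    by_contra! h
    simp_all

theorem arrows_infStar_matching_iff :
    Arrows G InfStar (Matching n) ↔ ∃ X : Finset V, ↑X ⊆ G.infiniteDegreeVerts ∧ X.card = n := by
  refine ⟨fun h => ?_, fun ⟨X, hX, hcard⟩ => hcard ▸ arrows_of_subset_infiniteDegreeVerts X hX⟩
  by_cases hinf : G.infiniteDegreeVerts.Infinite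
  · exact hinf.exists_subset_card_eq n
  · rw [Set.not_infinite] at hinf
    obtain ⟨X, hXS, hX⟩ := Finset.exists_subset_card_eq (card_le_of_arrows hinf.coe_toFinset.ge h)
    exact ⟨X, hinf.subset_toFinset.1 hXS, hX⟩

end Arrows

theorem stmt17_general (n : ℕ) :
    (∀ (W : Type) [Countable W] (F : SimpleGraph W), InFamilyN n F →
      Arrows F InfStar (Matching n)) ∧
    (∀ (W : Type) [Countable W] (Γ : SimpleGraph W), Arrows Γ InfStar (Matching n) →
      ∃ F' : SimpleGraph W, F' ≤ Γ ∧ InFamilyN n F') := by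
  constructor
  · rintro W _ F ⟨⟨X, hX, rfl⟩, -⟩
    exact arrows_infStar_matching_iff.2 ⟨X, hX.le, rfl⟩
  · rintro W _ Γ h
    obtain ⟨X, hX, rfl⟩ := arrows_infStar_matching_iff.1 h
    exact ⟨_, incidentSubgraph_le, inFamilyN_incidentSubgraph hX⟩

/-- Every member of `𝓕ₙ` arrows `(S_∞, nK₂)`, and every graph arrowing `(S_∞, nK₂)`
contains a subgraph belonging to `𝓕ₙ`. -/
theorem stmt17 (n : ℕ) (hn : 1 ≤ n) :
    (∀ (W : Type) [Countable W] (F : SimpleGraph W), InFamilyN n F →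
      Arrows F InfStar (Matching n)) ∧
    (∀ (W : Type) [Countable W] (Γ : SimpleGraph W), Arrows Γ InfStar (Matching n) →
      ∃ F' : SimpleGraph W, F' ≤ Γ ∧ InFamilyN n F') :=
  stmt17_general n
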